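/- Fix ε ∈ (0,1) and c > 0, and let t0 < t1 with τ := t1 − t0 satisfying: τ < ε·R_min²/c, τ < R_min/(2‖R'‖), and τ < 2√(1+√(1−ε²))·R_min/√‖(R²)''‖. Then the reduced Lagrangian action of the Dirichlet solution r satisfies ∫_{t0}^{t1} ( ½·r'(t)² − c²/(2r(t)²) ) dt = ½·τ·A(t0,t1) + c·arctan( cτ/√(R(t0)²R(t1)² − c²τ²) ) − cπ, i.e. it equals h(t0,t1) − cπ. -/

import Mathlib

noncomputable section

/-- Sup-norm of a function (for a continuous 1-periodic function this is the maximum of `|f|`). -/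
def supNorm (f : ℝ → ℝ) : ℝ := sSup (Set.range fun t => |f t|)

/-- Minimum value of `R` (attained for a continuous 1-periodic `R`). -/
def Rmin (R : ℝ → ℝ) : ℝ := sInf (Set.range R)

/-- Maximum value of `R` (attained for a continuous 1-periodic `R`). -/
def Rmax (R : ℝ → ℝ) : ℝ := sSup (Set.range R)

/-- The constant `σ = min { R_min/(2‖R'‖) , 2√(1+√(1−ε²))·R_min/√‖(R²)''‖ }`. -/
def sigmaR (R : ℝ → ℝ) (ε : ℝ) : ℝ :=
  min (Rmin R / (2 * supNorm (deriv R)))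
    (2 * Real.sqrt (1 + Real.sqrt (1 - ε ^ 2)) * Rmin R /
      Real.sqrt (supNorm (deriv (deriv (fun t => R t ^ 2)))))

/-- `√(R(t0)²R(t1)² − c²(t1−t0)²)`. -/
def Ssq (R : ℝ → ℝ) (c t0 t1 : ℝ) : ℝ :=
  Real.sqrt (R t0 ^ 2 * R t1 ^ 2 - c ^ 2 * (t1 - t0) ^ 2)

/-- `A(t0,t1) = (R(t0)² + R(t1)² + 2√(R(t0)²R(t1)² − c²(t1−t0)²))/(t1−t0)²`. -/
def Afun (R : ℝ → ℝ) (c t0 t1 : ℝ) : ℝ :=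
  (R t0 ^ 2 + R t1 ^ 2 + 2 * Ssq R c t0 t1) / (t1 - t0) ^ 2

/-- `B = −( t0 + (R(t0)² + √(R(t0)²R(t1)² − c²(t1−t0)²))/((t1−t0)·A) )`. -/
def Bfun (R : ℝ → ℝ) (c t0 t1 : ℝ) : ℝ :=
  -(t0 + (R t0 ^ 2 + Ssq R c t0 t1) / ((t1 - t0) * Afun R c t0 t1))

/-- The Dirichlet solution `r(t) = √((A²(t+B)² + c²)/A)`. -/
def dirich (R : ℝ → ℝ) (c t0 t1 t : ℝ) : ℝ :=
  Real.sqrt ((Afun R c t0 t1 ^ 2 * (t + Bfun R c t0 t1) ^ 2 + c ^ 2) / Afun R c t0 t1)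

/-- The generating function
`h(t0,t1) = ½(t1−t0)·A(t0,t1) + c·arctan( c(t1−t0)/√(R(t0)²R(t1)² − c²(t1−t0)²) )`. -/
def hgen (R : ℝ → ℝ) (c t0 t1 : ℝ) : ℝ :=
  (1 / 2) * (t1 - t0) * Afun R c t0 t1 +
    c * Real.arctan (c * (t1 - t0) / Ssq R c t0 t1)

/-- `∂₁h`, the partial derivative of `h` in its first argument. -/
def d1h (R : ℝ → ℝ) (c t0 t1 : ℝ) : ℝ := deriv (fun s => hgen R c s t1) t0

/-- `∂₂h`, the partial derivative of `h` in its second argument. -/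
def d2h (R : ℝ → ℝ) (c t0 t1 : ℝ) : ℝ := deriv (fun s => hgen R c t0 s) t1

/-- `∂₁₂h`, the mixed second partial derivative of `h`. -/
def d12h (R : ℝ → ℝ) (c t0 t1 : ℝ) : ℝ := deriv (fun s => d1h R c t0 s) t1

/-!
The first time-gap condition gives `cτ < R_min² ≤ R(t0)R(t1)`, so
`S := √(R(t0)²R(t1)² − c²τ²)` is positive. The Dirichlet solution is the distance to the origin
of uniform straight-line motion with speed `√A` and angular momentum `c`. Along it the reduced
Lagrangian is the kinetic energy `A/2` minus `c` times the angular velocity `c/r²`, so the action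
is `τA/2 − c·Δθ`, where `Δθ = arctan(A(t1+B)/c) − arctan(A(t0+B)/c)` is the swept angle. The
boundary values `A(t0+B) = −(R(t0)²+S)/τ` and `A(t1+B) = (R(t1)²+S)/τ` turn the arctangent
addition formula into `Δθ = π − arctan(cτ/S)`: the product of the two slopes exceeds `1`, so the
angle swept is more than `π/2`.
-/

open Real

lemma Rmin_nonneg {R : ℝ → ℝ} (hpos : ∀ t, 0 < R t) : 0 ≤ Rmin R :=
  Real.sInf_nonneg (by rintro _ ⟨t, rfl⟩; exact (hpos t).le)

lemma Rmin_le {R : ℝ → ℝ} (hpos : ∀ t, 0 < R t) (t : ℝ) : Rmin R ≤ R t :=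
  csInf_le ⟨0, by rintro _ ⟨s, rfl⟩; exact (hpos s).le⟩ (Set.mem_range_self t)

lemma mul_sub_lt_mul_of_lt_Rmin_sq {R : ℝ → ℝ} {ε c t0 t1 : ℝ} (hpos : ∀ t, 0 < R t)
    (hε : ε < 1) (hc : 0 < c) (hτ : t1 - t0 < ε * Rmin R ^ 2 / c) :
    c * (t1 - t0) < R t0 * R t1 := by
  have hm := Rmin_nonneg hpos
  calc c * (t1 - t0) < ε * Rmin R ^ 2 := by rwa [lt_div_iff₀' hc] at hτ
    _ ≤ Rmin R ^ 2 := by nlinarith [sq_nonneg (Rmin R)]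
    _ ≤ R t0 * R t1 := by
      rw [sq]; exact mul_le_mul (Rmin_le hpos t0) (Rmin_le hpos t1) hm (hpos t0).le

section FreeRadial

variable {A B c : ℝ}

lemma hasDerivAt_sqrt_quadratic (hA : 0 < A) (hc : c ≠ 0) (t : ℝ) :
    HasDerivAt (fun t => √((A ^ 2 * (t + B) ^ 2 + c ^ 2) / A))
      (A * (t + B) / √((A ^ 2 * (t + B) ^ 2 + c ^ 2) / A)) t := by
  have hq : 0 < (A ^ 2 * (t + B) ^ 2 + c ^ 2) / A := by positivity
  refine ((((((hasDerivAt_id t).add_const B).pow 2).const_mul (A ^ 2)).add_const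
    (c ^ 2)).div_const A).sqrt hq.ne' |>.congr_deriv ?_
  have := (Real.sqrt_pos.mpr hq).ne'
  simp only [id_eq, Pi.pow_apply]
  push_cast
  field_simp

lemma lagrangian_sqrt_quadratic (hA : 0 < A) (hc : c ≠ 0) (t : ℝ) :
    (1 / 2) * deriv (fun t => √((A ^ 2 * (t + B) ^ 2 + c ^ 2) / A)) t ^ 2
      - c ^ 2 / (2 * √((A ^ 2 * (t + B) ^ 2 + c ^ 2) / A) ^ 2)
      = A / 2 - A * c ^ 2 / (A ^ 2 * (t + B) ^ 2 + c ^ 2) := by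
  have hq : 0 < A ^ 2 * (t + B) ^ 2 + c ^ 2 := by positivity
  rw [(hasDerivAt_sqrt_quadratic hA hc t).deriv, div_pow, Real.sq_sqrt (by positivity)]
  field_simp
  ring

lemma hasDerivAt_mul_sub_mul_arctan (hc : c ≠ 0) (t : ℝ) :
    HasDerivAt (fun s => A / 2 * s - c * arctan (A * (s + B) / c))
      (A / 2 - A * c ^ 2 / (A ^ 2 * (t + B) ^ 2 + c ^ 2)) t := by
  have hq : 0 < A ^ 2 * (t + B) ^ 2 + c ^ 2 := by positivity
  refine (((hasDerivAt_id t).const_mul (A / 2)).sub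
    (((((hasDerivAt_id t).add_const B).const_mul A).div_const c).arctan.const_mul c)).congr_deriv ?_
  simp only [id_eq, mul_one]
  field_simp
  ring

lemma integral_lagrangian_sqrt_quadratic (hA : 0 < A) (hc : c ≠ 0) (a b : ℝ) :
    (∫ t in a..b, ((1 / 2) * deriv (fun t => √((A ^ 2 * (t + B) ^ 2 + c ^ 2) / A)) t ^ 2
      - c ^ 2 / (2 * √((A ^ 2 * (t + B) ^ 2 + c ^ 2) / A) ^ 2)))
      = A / 2 * (b - a) - c * (arctan (A * (b + B) / c) - arctan (A * (a + B) / c)) := by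
  simp_rw [lagrangian_sqrt_quadratic hA hc]
  have hcont : Continuous fun t => A / 2 - A * c ^ 2 / (A ^ 2 * (t + B) ^ 2 + c ^ 2) := by
    refine continuous_const.sub (continuous_const.div (by fun_prop) fun t => ?_)
    positivity
  rw [intervalIntegral.integral_eq_sub_of_hasDerivAt
    (fun t _ => hasDerivAt_mul_sub_mul_arctan hc t) (hcont.intervalIntegrable a b)]
  ring

end FreeRadial

lemma arctan_add_arctan_of_sq_eq {p q S k : ℝ} (hp : 0 ≤ p) (hq : 0 ≤ q) (hS : 0 < S)
    (hk : 0 < k) (hSsq : S ^ 2 = p * q - k ^ 2) :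
    arctan ((q + S) / k) + arctan ((p + S) / k) = π - arctan (k / S) := by
  have hprod : 1 < (q + S) / k * ((p + S) / k) := by
    rw [div_mul_div_comm, lt_div_iff₀ (by positivity)]
    nlinarith [mul_pos hS hS, mul_nonneg hS.le hp, mul_nonneg hS.le hq]
  have hratio : ((q + S) / k + (p + S) / k) / (1 - (q + S) / k * ((p + S) / k)) = -(k / S) := by
    rw [div_eq_iff (by linarith)]
    field_simp
    linear_combination hSsq
  rw [arctan_add_eq_add_pi hprod (by positivity), hratio, arctan_neg]
  ring

section Dirichlet

variable {R : ℝ → ℝ} {c t0 t1 : ℝ}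

lemma Afun_mul_add_Bfun_left (ht : t0 ≠ t1) (hA : Afun R c t0 t1 ≠ 0) :
    Afun R c t0 t1 * (t0 + Bfun R c t0 t1) = -((R t0 ^ 2 + Ssq R c t0 t1) / (t1 - t0)) := by
  have : t1 - t0 ≠ 0 := sub_ne_zero.mpr ht.symm
  rw [Bfun]
  field_simp
  ring

lemma Afun_mul_add_Bfun_right (ht : t0 ≠ t1) (hA : Afun R c t0 t1 ≠ 0) :
    Afun R c t0 t1 * (t1 + Bfun R c t0 t1) = (R t1 ^ 2 + Ssq R c t0 t1) / (t1 - t0) := by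
  have : t1 - t0 ≠ 0 := sub_ne_zero.mpr ht.symm
  have hleft := Afun_mul_add_Bfun_left ht hA
  calc Afun R c t0 t1 * (t1 + Bfun R c t0 t1)
      = Afun R c t0 t1 * (t1 - t0) + Afun R c t0 t1 * (t0 + Bfun R c t0 t1) := by ring
    _ = _ := by rw [hleft, Afun]; field_simp; ring

lemma Ssq_pos (h : c ^ 2 * (t1 - t0) ^ 2 < R t0 ^ 2 * R t1 ^ 2) : 0 < Ssq R c t0 t1 :=
  Real.sqrt_pos.mpr (sub_pos.mpr h)

lemma sq_Ssq (h : c ^ 2 * (t1 - t0) ^ 2 < R t0 ^ 2 * R t1 ^ 2) :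
    Ssq R c t0 t1 ^ 2 = R t0 ^ 2 * R t1 ^ 2 - c ^ 2 * (t1 - t0) ^ 2 :=
  Real.sq_sqrt (sub_nonneg.mpr h.le)

lemma Afun_pos (h0 : R t0 ≠ 0) (ht : t0 ≠ t1) : 0 < Afun R c t0 t1 := by
  have : t1 - t0 ≠ 0 := sub_ne_zero.mpr ht.symm
  have := Real.sqrt_nonneg (R t0 ^ 2 * R t1 ^ 2 - c ^ 2 * (t1 - t0) ^ 2)
  rw [Afun, Ssq]
  positivity

end Dirichlet

theorem lagrangian_action_formula_general (R : ℝ → ℝ) (ε c t0 t1 : ℝ)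
    (hpos : ∀ t, 0 < R t)
    (hε : ε ∈ Set.Ioo (0 : ℝ) 1) (hc : 0 < c) (ht : t0 < t1)
    (hτ1 : t1 - t0 < ε * Rmin R ^ 2 / c) :
    (∫ t in t0..t1,
        ((1 / 2) * (deriv (dirich R c t0 t1) t) ^ 2 - c ^ 2 / (2 * dirich R c t0 t1 t ^ 2))) =
      (1 / 2) * (t1 - t0) * Afun R c t0 t1 +
        c * Real.arctan (c * (t1 - t0) / Ssq R c t0 t1) - c * Real.pi ∧
    (∫ t in t0..t1,
        ((1 / 2) * (deriv (dirich R c t0 t1) t) ^ 2 - c ^ 2 / (2 * dirich R c t0 t1 t ^ 2))) =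
      hgen R c t0 t1 - c * Real.pi := by
  have hτ : 0 < t1 - t0 := sub_pos.mpr ht
  have hS2 : c ^ 2 * (t1 - t0) ^ 2 < R t0 ^ 2 * R t1 ^ 2 := by
    rw [← mul_pow, ← mul_pow]
    exact pow_lt_pow_left₀ (mul_sub_lt_mul_of_lt_Rmin_sq hpos hε.2 hc hτ1) (by positivity)
      two_ne_zero
  have hA := Afun_pos (c := c) (hpos t0).ne' ht.ne
  have harctan := arctan_add_arctan_of_sq_eq (sq_nonneg (R t0)) (sq_nonneg (R t1))
    (Ssq_pos hS2) (mul_pos hc hτ) (by rw [sq_Ssq hS2]; ring)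
  have hI := integral_lagrangian_sqrt_quadratic (B := Bfun R c t0 t1) hA hc.ne' t0 t1
  rw [Afun_mul_add_Bfun_right ht.ne hA.ne', Afun_mul_add_Bfun_left ht.ne hA.ne', neg_div,
    arctan_neg, div_div, div_div, mul_comm (t1 - t0) c] at hI
  have haction : (∫ t in t0..t1,
      ((1 / 2) * (deriv (dirich R c t0 t1) t) ^ 2 - c ^ 2 / (2 * dirich R c t0 t1 t ^ 2))) =
      (1 / 2) * (t1 - t0) * Afun R c t0 t1 +
        c * arctan (c * (t1 - t0) / Ssq R c t0 t1) - c * π := by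
    unfold dirich
    rw [hI]
    linear_combination (-c) * harctan
  exact ⟨haction, haction⟩

/-- Under the time-gap conditions of Proposition 3.1 the reduced Lagrangian
action of the Dirichlet solution equals
`½(t1−t0)A(t0,t1) + c·arctan( c(t1−t0)/√(R(t0)²R(t1)² − c²(t1−t0)²) ) − cπ = h(t0,t1) − cπ`. -/
theorem lagrangian_action_formula (R : ℝ → ℝ) (ε c t0 t1 : ℝ)
    (hC : ContDiff ℝ 2 R) (hper : ∀ t, R (t + 1) = R t) (hpos : ∀ t, 0 < R t)
    (hnc : ∃ a b, R a ≠ R b)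
    (hε : ε ∈ Set.Ioo (0 : ℝ) 1) (hc : 0 < c) (ht : t0 < t1)
    (hτ1 : t1 - t0 < ε * Rmin R ^ 2 / c)
    (hτ2 : t1 - t0 < Rmin R / (2 * supNorm (deriv R)))
    (hτ3 : t1 - t0 < 2 * Real.sqrt (1 + Real.sqrt (1 - ε ^ 2)) * Rmin R /
      Real.sqrt (supNorm (deriv (deriv (fun t => R t ^ 2))))) :
    (∫ t in t0..t1,
        ((1 / 2) * (deriv (dirich R c t0 t1) t) ^ 2 - c ^ 2 / (2 * dirich R c t0 t1 t ^ 2))) =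
      (1 / 2) * (t1 - t0) * Afun R c t0 t1 +
        c * Real.arctan (c * (t1 - t0) / Ssq R c t0 t1) - c * Real.pi ∧
    (∫ t in t0..t1,
        ((1 / 2) * (deriv (dirich R c t0 t1) t) ^ 2 - c ^ 2 / (2 * dirich R c t0 t1 t ^ 2))) =
      hgen R c t0 t1 - c * Real.pi :=
  lagrangian_action_formula_general R ε c t0 t1 hpos hε hc ht hτ1
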